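/- arXiv:2412.11708 — 2 statements merged into one kernel-verified Lean document; each statement's English description precedes it below -/
import Mathlib

section
/- Let S be a finite set with |S| ≥ 3 and let 𝒫 be a family of pairwise distinct, pairwise compatible 3-partitions of S. Then |𝒫| ≤ |S| − 2. -/
/-- A 3-partition of a finite set `S`: three pairwise distinct nonempty parts
(a `Finset` of parts of cardinality 3), pairwise disjoint, whose union is `S`. -/
def IsThreePartition {α : Type*} [DecidableEq α] (S : Finset α)
    (P : Finset (Finset α)) : Prop :=
  P.card = 3 ∧ (∀ A ∈ P, A.Nonempty) ∧
    (∀ A ∈ P, ∀ B ∈ P, A ≠ B → Disjoint A B) ∧ P.sup id = S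

/-- Two 3-partitions are compatible: some part of `P` contains the union of two of the
three parts of `Q` (equivalently, with the roles of `P` and `Q` exchanged). -/
def CompatiblePartitions {α : Type*} [DecidableEq α]
    (P Q : Finset (Finset α)) : Prop :=
  ∃ A ∈ P, ∃ B ∈ Q, ∀ C ∈ Q, C ≠ B → C ⊆ A

/-!
Fix a member `P` of the family. Every other member `Q` is compatible with `P`, so two parts of
`Q` lie in one part `A` of `P`. Pick a point `s ∈ S \ A`; restricting the members with two parts
in `A` to `A ∪ {s}` keeps them distinct, compatible 3-partitions. Induction on `|S|` bounds their
number by `|A| - 1`, and summing over the three parts of `P` gives `|𝒫| ≤ 1 + (|S| - 3)`.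
-/

open Finset

section

variable {α : Type*} [DecidableEq α]

theorem Finset.card_le_sum_card_filter {β ι : Type*} {s : Finset β} {t : Finset ι}
    {p : ι → β → Prop} [∀ i, DecidablePred (p i)] (h : ∀ x ∈ s, ∃ i ∈ t, p i x) :
    #s ≤ ∑ i ∈ t, #(s.filter (p i)) := by
  classical
  calc #s ≤ #(t.biUnion fun i => s.filter (p i)) := card_le_card fun x hx => by
        obtain ⟨i, hi, hpx⟩ := h x hx
        exact mem_biUnion.2 ⟨i, hi, mem_filter.2 ⟨hx, hpx⟩⟩
    _ ≤ ∑ i ∈ t, #(s.filter (p i)) := card_biUnion_le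

theorem Finset.card_le_card_of_pairwiseDisjoint {𝒞 : Finset (Finset α)} {A : Finset α}
    (hdisj : (𝒞 : Set (Finset α)).PairwiseDisjoint id) (hne : ∀ C ∈ 𝒞, C.Nonempty)
    (hsub : ∀ C ∈ 𝒞, C ⊆ A) : #𝒞 ≤ #A :=
  (card_le_card_biUnion hdisj hne).trans (card_le_card (biUnion_subset.2 hsub))

namespace IsThreePartition

variable {S T A C D : Finset α} {P : Finset (Finset α)}

theorem subset_of_mem (hP : IsThreePartition S P) (hC : C ∈ P) : C ⊆ S :=
  hP.2.2.2 ▸ le_sup (f := id) hC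

theorem exists_mem (hP : IsThreePartition S P) {x : α} (hx : x ∈ S) : ∃ C ∈ P, x ∈ C := by
  rw [← hP.2.2.2] at hx
  simpa using mem_sup.1 hx

theorem eq_of_mem_of_mem (hP : IsThreePartition S P) (hC : C ∈ P) (hD : D ∈ P) {x : α}
    (hxC : x ∈ C) (hxD : x ∈ D) : C = D :=
  by_contra fun h => disjoint_left.1 (hP.2.2.1 C hC D hD h) hxC hxD

theorem sum_card (hP : IsThreePartition S P) : ∑ C ∈ P, #C = #S := by
  rw [← hP.2.2.2, sup_eq_biUnion]
  exact (card_biUnion hP.2.2.1).symm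

theorem two_le_card_sdiff (hP : IsThreePartition S P) (hA : A ∈ P) : 2 ≤ #(S \ A) := by
  have hcard : #(P.erase A) = 2 := by rw [card_erase_of_mem hA, hP.1]
  refine hcard ▸ card_le_card_of_pairwiseDisjoint ?_ ?_ ?_
  · exact fun C hC D hD => hP.2.2.1 C (mem_of_mem_erase hC) D (mem_of_mem_erase hD)
  · exact fun C hC => hP.2.1 C (mem_of_mem_erase hC)
  · exact fun C hC => subset_sdiff.2 ⟨hP.subset_of_mem (mem_of_mem_erase hC),
      hP.2.2.1 C (mem_of_mem_erase hC) A hA (ne_of_mem_erase hC)⟩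

theorem image_inter (hP : IsThreePartition S P) (hT : T ⊆ S)
    (hmeet : ∀ C ∈ P, (C ∩ T).Nonempty) : IsThreePartition T (P.image (· ∩ T)) := by
  have hinj : Set.InjOn (· ∩ T) P := fun C hC D hD h => by
    obtain ⟨x, hx⟩ := hmeet C hC
    have hxD : x ∈ D ∩ T := by simpa only [← h]
    exact hP.eq_of_mem_of_mem hC hD (mem_inter.1 hx).1 (mem_inter.1 hxD).1
  refine ⟨(card_image_of_injOn hinj).trans hP.1, forall_mem_image.2 hmeet, ?_, ?_⟩
  · simp only [forall_mem_image]
    exact fun C hC D hD hne => (hP.2.2.1 C hC D hD (by rintro rfl; exact hne rfl)).mono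
      inter_subset_left inter_subset_left
  · have := sup_inf_distrib_right P id T
    rw [hP.2.2.2] at this
    rw [sup_image]
    exact this.symm.trans (inter_eq_right.2 hT)

end IsThreePartition

-- `CompatiblePartitions P Q` is, by definition, `∃ A ∈ P, AllButOnePartSubset Q A`.
def AllButOnePartSubset (Q : Finset (Finset α)) (A : Finset α) : Prop :=
  ∃ B ∈ Q, ∀ C ∈ Q, C ≠ B → C ⊆ A

instance (Q : Finset (Finset α)) (A : Finset α) : Decidable (AllButOnePartSubset Q A) :=
  inferInstanceAs (Decidable (∃ B ∈ Q, ∀ C ∈ Q, C ≠ B → C ⊆ A))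

namespace AllButOnePartSubset

variable {S A C : Finset α} {Q : Finset (Finset α)}

theorem two_le_card (h : AllButOnePartSubset Q A) (hQ : IsThreePartition S Q) : 2 ≤ #A := by
  obtain ⟨B, hB, hsub⟩ := h
  have hcard : #(Q.erase B) = 2 := by rw [card_erase_of_mem hB, hQ.1]
  refine hcard ▸ card_le_card_of_pairwiseDisjoint ?_ ?_ ?_
  · exact fun C hC D hD => hQ.2.2.1 C (mem_of_mem_erase hC) D (mem_of_mem_erase hD)
  · exact fun C hC => hQ.2.1 C (mem_of_mem_erase hC)
  · exact fun C hC => hsub C (mem_of_mem_erase hC) (ne_of_mem_erase hC)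

theorem exists_sdiff_subset (h : AllButOnePartSubset Q A) (hQ : IsThreePartition S Q) :
    ∃ B ∈ Q, S \ A ⊆ B ∧ ∀ C ∈ Q, C ≠ B → C ⊆ A := by
  obtain ⟨B, hB, hsub⟩ := h
  refine ⟨B, hB, fun x hx => ?_, hsub⟩
  obtain ⟨hxS, hxA⟩ := mem_sdiff.1 hx
  obtain ⟨D, hD, hxD⟩ := hQ.exists_mem hxS
  by_contra hxB
  exact hxA (hsub D hD (by rintro rfl; exact hxB hxD) hxD)

variable {star : α}

theorem sdiff_subset_of_mem (h : AllButOnePartSubset Q A) (hQ : IsThreePartition S Q)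
    (hstar : star ∈ S \ A) (hC : C ∈ Q) (hsC : star ∈ C) : S \ A ⊆ C := by
  obtain ⟨B, hB, hSB, -⟩ := h.exists_sdiff_subset hQ
  rwa [hQ.eq_of_mem_of_mem hC hB hsC (hSB hstar)]

theorem subset_of_notMem (h : AllButOnePartSubset Q A) (hQ : IsThreePartition S Q)
    (hstar : star ∈ S \ A) (hC : C ∈ Q) (hsC : star ∉ C) : C ⊆ A := by
  obtain ⟨B, hB, hSB, hsub⟩ := h.exists_sdiff_subset hQ
  exact hsub C hC (by rintro rfl; exact hsC (hSB hstar))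

theorem isThreePartition_image_inter_insert (h : AllButOnePartSubset Q A)
    (hQ : IsThreePartition S Q) (hAS : A ⊆ S) (hstar : star ∈ S \ A) :
    IsThreePartition (insert star A) (Q.image (· ∩ insert star A)) := by
  refine hQ.image_inter (insert_subset (mem_sdiff.1 hstar).1 hAS) fun C hC => ?_
  by_cases hsC : star ∈ C
  · exact ⟨star, mem_inter.2 ⟨hsC, mem_insert_self _ _⟩⟩
  · rw [inter_eq_left.2 ((h.subset_of_notMem hQ hstar hC hsC).trans (subset_insert _ _))]
    exact hQ.2.1 C hC

/-- The restriction to `insert star A` forgets only `S \ A`, which lies in the part through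
`star`. -/
theorem image_image_inter_insert (h : AllButOnePartSubset Q A) (hQ : IsThreePartition S Q)
    (hstar : star ∈ S \ A) :
    (Q.image (· ∩ insert star A)).image (fun D => if star ∈ D then D ∪ (S \ A) else D) = Q := by
  rw [image_image]
  conv_rhs => rw [← image_id (s := Q)]
  refine image_congr fun C hC => ?_
  by_cases hsC : star ∈ C
  · have hsCT : star ∈ C ∩ insert star A := mem_inter.2 ⟨hsC, mem_insert_self _ _⟩
    simp only [Function.comp_apply, if_pos hsCT, id]
    refine subset_antisymm (union_subset inter_subset_left
      (h.sdiff_subset_of_mem hQ hstar hC hsC)) fun x hx => ?_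
    by_cases hxA : x ∈ A
    · exact mem_union_left _ (mem_inter.2 ⟨hx, mem_insert_of_mem hxA⟩)
    · exact mem_union_right _ (mem_sdiff.2 ⟨hQ.subset_of_mem hC hx, hxA⟩)
  · have hCA := h.subset_of_notMem hQ hstar hC hsC
    rw [Function.comp_apply, inter_eq_left.2 (hCA.trans (subset_insert _ _)), if_neg hsC, id]

end AllButOnePartSubset

theorem CompatiblePartitions.image_inter {P Q : Finset (Finset α)}
    (h : CompatiblePartitions P Q) (T : Finset α) :
    CompatiblePartitions (P.image (· ∩ T)) (Q.image (· ∩ T)) := by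
  obtain ⟨A, hA, B, hB, hsub⟩ := h
  refine ⟨A ∩ T, mem_image_of_mem _ hA, B ∩ T, mem_image_of_mem _ hB, ?_⟩
  simp only [forall_mem_image]
  exact fun C hC hne => inter_subset_inter_right (hsub C hC (by rintro rfl; exact hne rfl))

def IsCompatibleFamily (S : Finset α) (Fam : Finset (Finset (Finset α))) : Prop :=
  (∀ P ∈ Fam, IsThreePartition S P) ∧ ∀ P ∈ Fam, ∀ Q ∈ Fam, P ≠ Q → CompatiblePartitions P Q

namespace IsCompatibleFamily

variable {S A : Finset α} {Fam G : Finset (Finset (Finset α))} {star : α}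

theorem mono (hFam : IsCompatibleFamily S Fam) (hG : G ⊆ Fam) : IsCompatibleFamily S G :=
  ⟨fun P hP => hFam.1 P (hG hP), fun P hP Q hQ => hFam.2 P (hG hP) Q (hG hQ)⟩

theorem card_image_image_inter_insert (hG : IsCompatibleFamily S G)
    (hGA : ∀ Q ∈ G, AllButOnePartSubset Q A) (hstar : star ∈ S \ A) :
    #(G.image (·.image (· ∩ insert star A))) = #G :=
  card_image_of_injOn fun Q hQ Q' hQ' hQQ' => by
    rw [← (hGA Q hQ).image_image_inter_insert (hG.1 Q hQ) hstar,
      ← (hGA Q' hQ').image_image_inter_insert (hG.1 Q' hQ') hstar]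
    exact congrArg _ hQQ'

theorem image_image_inter_insert (hG : IsCompatibleFamily S G)
    (hGA : ∀ Q ∈ G, AllButOnePartSubset Q A) (hAS : A ⊆ S) (hstar : star ∈ S \ A) :
    IsCompatibleFamily (insert star A) (G.image (·.image (· ∩ insert star A))) := by
  refine ⟨forall_mem_image.2 fun Q hQ =>
    (hGA Q hQ).isThreePartition_image_inter_insert (hG.1 Q hQ) hAS hstar, ?_⟩
  simp only [forall_mem_image]
  exact fun P hP Q hQ hne => (hG.2 P hP Q hQ (by rintro rfl; exact hne rfl)).image_inter _

end IsCompatibleFamily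

theorem card_filter_allButOnePartSubset_lt {S A : Finset α} {P : Finset (Finset α)}
    {Fam : Finset (Finset (Finset α))} (hP : IsThreePartition S P) (hA : A ∈ P)
    (hFam : IsCompatibleFamily S Fam)
    (ih : ∀ T ⊂ S, ∀ G, IsCompatibleFamily T G → #G ≤ #T - 2) :
    #(Fam.filter (AllButOnePartSubset · A)) < #A := by
  set G := Fam.filter (AllButOnePartSubset · A)
  obtain hG | ⟨Q, hQ⟩ := G.eq_empty_or_nonempty
  · rw [hG, card_empty]
    exact (hP.2.1 A hA).card_pos
  have hGA : ∀ Q ∈ G, AllButOnePartSubset Q A := fun Q hQ => (mem_filter.1 hQ).2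
  have hGfam : IsCompatibleFamily S G := hFam.mono (filter_subset _ Fam)
  have hA2 : 2 ≤ #A := (hGA Q hQ).two_le_card (hGfam.1 Q hQ)
  have hAS := hP.subset_of_mem hA
  have hSA : #(S \ A) = #S - #A := card_sdiff_of_subset hAS
  have hSA2 := hP.two_le_card_sdiff hA
  obtain ⟨star, hstar⟩ := card_pos.1 (by omega : 0 < #(S \ A))
  have hT : #(insert star A) = #A + 1 := card_insert_of_notMem (mem_sdiff.1 hstar).2
  have hTS : insert star A ⊂ S := by
    refine (insert_subset (mem_sdiff.1 hstar).1 hAS).ssubset_of_ne fun heq => ?_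
    rw [heq] at hT
    omega
  calc #G = #(G.image (·.image (· ∩ insert star A))) :=
        (hGfam.card_image_image_inter_insert hGA hstar).symm
    _ ≤ #(insert star A) - 2 := ih _ hTS _ (hGfam.image_image_inter_insert hGA hAS hstar)
    _ < #A := by omega

end

theorem compatible_three_partitions_card_le_general {α : Type*} [DecidableEq α]
    (S : Finset α)
    (Fam : Finset (Finset (Finset α)))
    (hpart : ∀ P ∈ Fam, IsThreePartition S P)
    (hcomp : ∀ P ∈ Fam, ∀ Q ∈ Fam, P ≠ Q → CompatiblePartitions P Q) :
    Fam.card ≤ S.card - 2 := by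
  suffices h : ∀ S Fam, IsCompatibleFamily S Fam → #Fam ≤ #S - 2 from h S Fam ⟨hpart, hcomp⟩
  intro S
  induction S using Finset.strongInduction with
  | H S ih =>
  intro Fam hFam
  obtain rfl | ⟨P, hP⟩ := Fam.eq_empty_or_nonempty
  · simp
  have hPpart := hFam.1 P hP
  have hcover : #(Fam.erase P) ≤ ∑ A ∈ P, #((Fam.erase P).filter (AllButOnePartSubset · A)) :=
    card_le_sum_card_filter fun Q hQ =>
      hFam.2 P hP Q (mem_of_mem_erase hQ) (ne_of_mem_erase hQ).symm
  have hparts : ∑ A ∈ P, (#((Fam.erase P).filter (AllButOnePartSubset · A)) + 1) ≤ ∑ A ∈ P, #A :=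
    sum_le_sum fun A hA =>
      card_filter_allButOnePartSubset_lt hPpart hA (hFam.mono (erase_subset P Fam)) ih
  rw [sum_add_distrib, sum_const, hPpart.1, hPpart.sum_card, smul_eq_mul, mul_one] at hparts
  have := card_erase_add_one hP
  omega

/-- Grimmett, Lemma 8.5: a family of pairwise distinct, pairwise
compatible 3-partitions of a finite set `S` with `|S| ≥ 3` has at most `|S| − 2`
members. -/
theorem compatible_three_partitions_card_le {α : Type*} [DecidableEq α]
    (S : Finset α) (hS : 3 ≤ S.card)
    (Fam : Finset (Finset (Finset α)))
    (hpart : ∀ P ∈ Fam, IsThreePartition S P)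
    (hcomp : ∀ P ∈ Fam, ∀ Q ∈ Fam, P ≠ Q → CompatiblePartitions P Q) :
    Fam.card ≤ S.card - 2 :=
  compatible_three_partitions_card_le_general S Fam hpart hcomp
end

section
/- For every dimer configuration m on the hexagonal lattice there exists a unique function h_m : F(ℍ) → ℤ with h_m(f₀) = 0 such that for all adjacent faces f, g with common side e: h_m(g) − h_m(f) = 1 − 3·1_{e ∈ m} if the vertex (1/√3)(f·e^{iπ/6} + g·e^{−iπ/6}) is black, and h_m(g) − h_m(f) = −1 + 3·1_{e ∈ m} if this vertex is white (here faces are identified with the complex numbers at their centers). Moreover the map m ↦ h_m is injective, so dimer configurations are in bijection with their height functions. -/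
/- Common definitions: the hexagonal lattice, fully-packed loop configurations,
   dimer configurations, flips, loops/paths, dual clusters, Gibbs measures. -/

noncomputable section

open Complex MeasureTheory

namespace HexPaper

/-- `ω = e^{iπ/3}`. -/
def hexω : ℂ := Complex.exp (Complex.I * Real.pi / 3)

/-- Centers of the faces of the hexagonal lattice. -/
def HexFaces : Set ℂ := {z | ∃ n m : ℤ, z = (n : ℂ) + (m : ℂ) * hexω}

/-- White vertices. -/
def WV : Set ℂ := {z | ∃ n m : ℤ, z = ((n : ℂ) + 1/3) + ((m : ℂ) + 1/3) * hexω}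

/-- Black vertices. -/
def BV : Set ℂ := {z | ∃ n m : ℤ, z = ((n : ℂ) - 1/3) + ((m : ℂ) + 2/3) * hexω}

/-- Vertices of the hexagonal lattice. -/
def HexVerts : Set ℂ := WV ∪ BV

/-- Edges of the hexagonal lattice: unordered pairs of vertices at distance `1/√3`
(the side length of the unit hexagons). -/
def HexEdges : Set (Sym2 ℂ) :=
  {e | ∃ u v : ℂ, u ∈ HexVerts ∧ v ∈ HexVerts ∧
        ‖u - v‖ = (Real.sqrt 3)⁻¹ ∧ e = s(u, v)}

/-- Degree of the vertex `v` in the edge set `w`. -/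
def degAt (w : Set (Sym2 ℂ)) (v : ℂ) : ℕ := {e ∈ w | v ∈ e}.ncard

/-- Fully-packed loop configuration: every vertex has degree exactly 2. -/
def IsFPLoop (w : Set (Sym2 ℂ)) : Prop :=
  w ⊆ HexEdges ∧ ∀ v ∈ HexVerts, degAt w v = 2

/-- Dimer configuration (perfect matching): every vertex has degree exactly 1. -/
def IsDimer (m : Set (Sym2 ℂ)) : Prop :=
  m ⊆ HexEdges ∧ ∀ v ∈ HexVerts, degAt m v = 1

/-- The six sides of the face centered at `z`: the edges both of whose endpoints are
at distance `1/√3` (the circumradius) from `z`. -/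
def faceSides (z : ℂ) : Set (Sym2 ℂ) :=
  {e ∈ HexEdges | ∀ v ∈ e, ‖v - z‖ = (Real.sqrt 3)⁻¹}

/-- The flip (XOR) operation at the face `f`. -/
def flip (f : ℂ) (E : Set (Sym2 ℂ)) : Set (Sym2 ℂ) :=
  if (E ∩ faceSides f).ncard = 3 then symmDiff E (faceSides f) else E

/-- Composition of flips: `flipSeq [f₁, …, f_k] = flip f_k ∘ ⋯ ∘ flip f₁`. -/
def flipSeq (l : List ℂ) (E : Set (Sym2 ℂ)) : Set (Sym2 ℂ) :=
  l.foldl (fun E f => flip f E) E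

/-- One step of adjacency inside `w`: `e'` is an edge of `w` sharing a vertex with `e`. -/
def adjStep (w : Set (Sym2 ℂ)) (e e' : Sym2 ℂ) : Prop :=
  e' ∈ w ∧ e ≠ e' ∧ ∃ v : ℂ, v ∈ e ∧ v ∈ e'

/-- Connected component (as an edge set) of the edge `e` in the configuration `w`. -/
def component (w : Set (Sym2 ℂ)) (e : Sym2 ℂ) : Set (Sym2 ℂ) :=
  {e' | Relation.ReflTransGen (adjStep w) e e'}

/-- Connected components of a configuration. -/
def ComponentsOf (w : Set (Sym2 ℂ)) : Set (Set (Sym2 ℂ)) :=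
  {C | ∃ e ∈ w, C = component w e}

/-- Loops of `w`: finite connected components. -/
def LoopsOf (w : Set (Sym2 ℂ)) : Set (Set (Sym2 ℂ)) :=
  {C | C ∈ ComponentsOf w ∧ C.Finite}

/-- Bi-infinite paths of `w`: infinite connected components. -/
def PathsOf (w : Set (Sym2 ℂ)) : Set (Set (Sym2 ℂ)) :=
  {C | C ∈ ComponentsOf w ∧ C.Infinite}

/-- The closed segment in the plane drawn by an edge. -/
def edgePoints (e : Sym2 ℂ) : Set ℂ :=
  {z | ∃ u v : ℂ, e = s(u, v) ∧ z ∈ segment ℝ u v}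

/-- The planar curve drawn by a set of edges. -/
def curve (E : Set (Sym2 ℂ)) : Set ℂ := ⋃ e ∈ E, edgePoints e

/-- The edge set `E` surrounds the point `z`: `z` is off the drawn curve and its connected
component in the complement of the curve is bounded (so the curve separates `z` from ∞). -/
def SurroundsPt (E : Set (Sym2 ℂ)) (z : ℂ) : Prop :=
  z ∉ curve E ∧ Bornology.IsBounded (connectedComponentIn (curve E)ᶜ z)

/-- The edge set `E` surrounds the set `X`. -/
def SurroundsSet (E : Set (Sym2 ℂ)) (X : Set ℂ) : Prop := ∀ z ∈ X, SurroundsPt E z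

/-- A (finite) cycle in the hexagonal lattice, as an edge set: nonempty, finite,
connected, and every vertex it touches has degree exactly 2. -/
def IsCycleSet (Γ : Set (Sym2 ℂ)) : Prop :=
  Γ ⊆ HexEdges ∧ Γ.Finite ∧ Γ.Nonempty ∧ (∀ e ∈ Γ, component Γ e = Γ) ∧
    ∀ v : ℂ, (∃ e ∈ Γ, v ∈ e) → degAt Γ v = 2

/-- Two faces are adjacent when their centers are at distance 1. -/
def facesAdj (f g : ℂ) : Prop :=
  f ∈ HexFaces ∧ g ∈ HexFaces ∧ ‖f - g‖ = 1

/-- One step of the dual configuration `w*`: adjacent faces whose common side is not in `w`. -/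
def dualStep (w : Set (Sym2 ℂ)) (f g : ℂ) : Prop :=
  facesAdj f g ∧ ∃ e, e ∈ faceSides f ∩ faceSides g ∧ e ∉ w

/-- The dual cluster of the face `f` in the configuration `w`. -/
def dualCluster (w : Set (Sym2 ℂ)) (f : ℂ) : Set ℂ :=
  {g | Relation.ReflTransGen (dualStep w) f g}

/-- All dual clusters of `w`. -/
def DualClusters (w : Set (Sym2 ℂ)) : Set (Set ℂ) :=
  {C | ∃ f ∈ HexFaces, C = dualCluster w f}

/-- Infinite dual clusters of `w`. -/
def InfDualClusters (w : Set (Sym2 ℂ)) : Set (Set ℂ) :=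
  {C | C ∈ DualClusters w ∧ C.Infinite}

/-- Two distinct dual clusters are adjacent if they contain two adjacent faces. -/
def clustersAdj (C C' : Set ℂ) : Prop :=
  C ≠ C' ∧ ∃ f ∈ C, ∃ g ∈ C', facesAdj f g

/-- The trifurcation event: four pairwise distinct infinite dual clusters,
three of them adjacent to the remaining one. -/
def Trifurcation (w : Set (Sym2 ℂ)) : Prop :=
  ∃ C₀ C₁ C₂ C₃ : Set ℂ,
    C₀ ∈ InfDualClusters w ∧ C₁ ∈ InfDualClusters w ∧
    C₂ ∈ InfDualClusters w ∧ C₃ ∈ InfDualClusters w ∧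
    C₀ ≠ C₁ ∧ C₀ ≠ C₂ ∧ C₀ ≠ C₃ ∧ C₁ ≠ C₂ ∧ C₁ ≠ C₃ ∧ C₂ ≠ C₃ ∧
    clustersAdj C₁ C₀ ∧ clustersAdj C₂ C₀ ∧ clustersAdj C₃ C₀

/- ### Measure-theoretic notions -/

/-- The σ-algebra on configurations generated by the events `{w | e ∈ w}`. -/
instance : MeasurableSpace (Set (Sym2 ℂ)) :=
  MeasurableSpace.generateFrom {A | ∃ e : Sym2 ℂ, A = {w | e ∈ w}}

/-- Translation of an edge by `t`. -/
def translateEdge (t : ℂ) (e : Sym2 ℂ) : Sym2 ℂ := Sym2.map (· + t) e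

/-- Translation of a configuration by `t`. -/
def translateConfig (t : ℂ) (w : Set (Sym2 ℂ)) : Set (Sym2 ℂ) := translateEdge t '' w

/-- Invariance of a measure under the translations by `1` and by `e^{iπ/3}`. -/
def TransInvariant (μ : Measure (Set (Sym2 ℂ))) : Prop :=
  ∀ t ∈ ({1, hexω} : Set ℂ), ∀ A : Set (Set (Sym2 ℂ)),
    μ (translateConfig t ⁻¹' A) = μ A

/-- Ergodicity: every translation-invariant event has measure 0 or 1. -/
def ErgodicMeasure (μ : Measure (Set (Sym2 ℂ))) : Prop :=
  ∀ A : Set (Set (Sym2 ℂ)),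
    (∀ t ∈ ({1, hexω} : Set ℂ), translateConfig t ⁻¹' A = A) → μ A = 0 ∨ μ A = 1

/-- Non-frozen loop measure: no edge has all its lattice translates almost surely present. -/
def NonFrozenLoop (μ : Measure (Set (Sym2 ℂ))) : Prop :=
  ¬ ∃ e ∈ HexEdges, ∀ n m : ℤ,
      μ {w | translateEdge ((n : ℂ) + (m : ℂ) * hexω) e ∈ w} = 1

/-- Non-frozen dimer measure: every edge is present with positive probability. -/
def NonFrozenDimer (μ : Measure (Set (Sym2 ℂ))) : Prop :=
  ∀ e ∈ HexEdges, 0 < μ {m | e ∈ m}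

/-- Edges incident to the vertex set `V` (`E_V` in the paper). -/
def edgesIncident (V : Set ℂ) : Set (Sym2 ℂ) := {e ∈ HexEdges | ∃ u ∈ V, u ∈ e}

/-- Boundary edges of the vertex set `V` (`∂E_V` in the paper). -/
def edgesBoundary (V : Set ℂ) : Set (Sym2 ℂ) :=
  {e ∈ HexEdges | (∃ u ∈ V, u ∈ e) ∧ ∃ v : ℂ, v ∈ e ∧ v ∈ HexVerts ∧ v ∉ V}

/-- A local pattern on `E_V` in which every vertex of `V` has degree `d`. -/
def LocalPattern (d : ℕ) (V : Set ℂ) (a : Set (Sym2 ℂ)) : Prop :=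
  a ⊆ edgesIncident V ∧ ∀ v ∈ V, degAt a v = d

/-- An event depending only on the edges outside `E_V`. -/
def DeterminedOutside (V : Set ℂ) (B : Set (Set (Sym2 ℂ))) : Prop :=
  ∀ w w' : Set (Sym2 ℂ),
    (∀ e : Sym2 ℂ, e ∉ edgesIncident V → (e ∈ w ↔ e ∈ w')) → (w ∈ B ↔ w' ∈ B)

/-- The DLR conditions for the uniform specification with vertex degrees `d`:
conditionally on the configuration outside `E_V`, any two compatible local patterns
(same boundary trace, correct degrees) are equally likely. -/
def GibbsDLR (d : ℕ) (μ : Measure (Set (Sym2 ℂ))) : Prop :=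
  ∀ V : Set ℂ, V.Finite → V ⊆ HexVerts →
    ∀ a b : Set (Sym2 ℂ), LocalPattern d V a → LocalPattern d V b →
      a ∩ edgesBoundary V = b ∩ edgesBoundary V →
      ∀ B : Set (Set (Sym2 ℂ)), DeterminedOutside V B →
        μ (B ∩ {w | w ∩ edgesIncident V = a}) = μ (B ∩ {w | w ∩ edgesIncident V = b})

/-- Gibbs measure for the loop `O(1)` model at `x = ∞`. -/
def IsLoopGibbs (μ : Measure (Set (Sym2 ℂ))) : Prop :=
  IsProbabilityMeasure μ ∧ μ {w | IsFPLoop w} = 1 ∧ GibbsDLR 2 μ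

/-- Gibbs measure for the dimer model. -/
def IsDimerGibbs (μ : Measure (Set (Sym2 ℂ))) : Prop :=
  IsProbabilityMeasure μ ∧ μ {m | IsDimer m} = 1 ∧ GibbsDLR 1 μ

/- ### Geometric events used by the swapping lemmas -/

/-- The open hexagon (Voronoi cell) of the face centered at `f`. -/
def faceRegion (f : ℂ) : Set ℂ :=
  {z | ∀ g ∈ HexFaces, g ≠ f → ‖z - f‖ < ‖z - g‖}

/-- The face `f` meets the region `X` (the paper's `f ∈ F(ℍ) ∩ X`). -/
def FaceMeets (f : ℂ) (X : Set ℂ) : Prop := (faceRegion f ∩ X).Nonempty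

/-- The event `L(r,R)`: no loop meeting `B(R)` has a branch in `B(R/2) \ B(r)`;
equivalently, every loop meeting `B(r)` stays inside `B(R/2)`. -/
def EventL (r R : ℝ) (w : Set (Sym2 ℂ)) : Prop :=
  ∀ ℓ ∈ LoopsOf w, (curve ℓ ∩ Metric.ball (0:ℂ) r).Nonempty →
    curve ℓ ⊆ Metric.ball (0:ℂ) (R / 2)

/-- Connected components of `curve γ` inside the closed annulus with radii `r ≤ R'`
crossing from the inner circle to the outer circle: the branches of `γ` in the annulus. -/
def annulusCrossings (γ : Set (Sym2 ℂ)) (r R' : ℝ) : Set (Set ℂ) :=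
  {C | ∃ z ∈ curve γ ∩ (Metric.closedBall (0:ℂ) R' \ Metric.ball (0:ℂ) r),
        C = connectedComponentIn (curve γ ∩ (Metric.closedBall (0:ℂ) R' \ Metric.ball (0:ℂ) r)) z ∧
        (C ∩ Metric.sphere (0:ℂ) r).Nonempty ∧ (C ∩ Metric.sphere (0:ℂ) R').Nonempty}

/-- The event `P(r,R)`: every bi-infinite path of `w` meeting `B(R)` has at most two
branches in `B(R/2) \ B(r)`. -/
def EventP (r R : ℝ) (w : Set (Sym2 ℂ)) : Prop :=
  ∀ γ ∈ PathsOf w, (curve γ ∩ Metric.ball (0:ℂ) R).Nonempty →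
    (annulusCrossings γ r (R / 2)).ncard ≤ 2

/-- The region between two disjoint bi-infinite paths (the paper's `Area(γ₁,γ₂)`):
the points of the complement of the two curves whose connected component has both
curves on its boundary. -/
def Between (γ₁ γ₂ : Set (Sym2 ℂ)) : Set ℂ :=
  {z | z ∉ curve γ₁ ∪ curve γ₂ ∧
       (closure (connectedComponentIn (curve γ₁ ∪ curve γ₂)ᶜ z) ∩ curve γ₁).Nonempty ∧
       (closure (connectedComponentIn (curve γ₁ ∪ curve γ₂)ᶜ z) ∩ curve γ₂).Nonempty}

/-- `γ₁, γ₂` are parallel in `w`: no other bi-infinite path of `w` enters the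
region between them. -/
def Parallel (w γ₁ γ₂ : Set (Sym2 ℂ)) : Prop :=
  γ₁ ≠ γ₂ ∧ ∀ γ ∈ PathsOf w, γ ≠ γ₁ → γ ≠ γ₂ → curve γ ∩ Between γ₁ γ₂ = ∅

/-- `γ₁, γ₂` are glued in `X`: every face meeting `X ∩ Area(γ₁,γ₂)` has a side on
`γ₁` and a side on `γ₂`. -/
def GluedIn (X : Set ℂ) (γ₁ γ₂ : Set (Sym2 ℂ)) : Prop :=
  ∀ f ∈ HexFaces, (faceRegion f ∩ (X ∩ Between γ₁ γ₂)).Nonempty →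
    (faceSides f ∩ γ₁).Nonempty ∧ (faceSides f ∩ γ₂).Nonempty

/-- The path `γ` bounds the dual cluster `C` of `w`. -/
def BoundsCluster (w γ : Set (Sym2 ℂ)) (C : Set ℂ) : Prop :=
  ∃ f ∈ HexFaces, dualCluster w f = C ∧ (faceSides f ∩ γ).Nonempty

/-- The event `G_X`: two bi-infinite paths meeting `X`, not glued in `X`, bounding a
common infinite dual cluster.  (`X = univ` gives `G_∞`, `X = B(r)` gives `G_r`.) -/
def EventG (X : Set ℂ) (w : Set (Sym2 ℂ)) : Prop :=
  ∃ γ₁ ∈ PathsOf w, ∃ γ₂ ∈ PathsOf w, γ₁ ≠ γ₂ ∧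
    (curve γ₁ ∩ X).Nonempty ∧ (curve γ₂ ∩ X).Nonempty ∧
    ¬ GluedIn X γ₁ γ₂ ∧
    ∃ C ∈ InfDualClusters w, BoundsCluster w γ₁ C ∧ BoundsCluster w γ₂ C

/-- The part of `γ` drawn outside the open ball `B(R)`. -/
def outerPart (R : ℝ) (γ : Set (Sym2 ℂ)) : Set (Sym2 ℂ) :=
  {e ∈ γ | edgePoints e ∩ Metric.ball (0:ℂ) R = ∅}

/-- The infinite branches of the bi-infinite path `γ` outside `B(R)`. -/
def infBranches (R : ℝ) (γ : Set (Sym2 ℂ)) : Set (Set (Sym2 ℂ)) :=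
  {C | C ∈ ComponentsOf (outerPart R γ) ∧ C.Infinite}

end HexPaper

namespace HexPaper

open scoped Classical

/-- The defining rule of the Thurston height function of a dimer configuration `m`:
`h f₀ = 0` and across any common side `e` of adjacent faces `f, g`, the increment
`h g − h f` equals `1 − 3·1_{e ∈ m}` or `−1 + 3·1_{e ∈ m}` according to the color of the
vertex `(1/√3)(f·e^{iπ/6} + g·e^{−iπ/6})`. -/
def heightRule (m : Set (Sym2 ℂ)) (h : ℂ → ℤ) : Prop :=
  h 0 = 0 ∧
  ∀ f g : ℂ, f ∈ HexFaces → g ∈ HexFaces → ‖f - g‖ = 1 →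
    ∀ e ∈ faceSides f ∩ faceSides g,
      (((Real.sqrt 3 : ℂ)⁻¹ * (f * Complex.exp (Complex.I * Real.pi / 6) +
          g * Complex.exp (-(Complex.I * Real.pi) / 6)) ∈ BV) →
        h g - h f = 1 - 3 * (if e ∈ m then 1 else 0)) ∧
      (((Real.sqrt 3 : ℂ)⁻¹ * (f * Complex.exp (Complex.I * Real.pi / 6) +
          g * Complex.exp (-(Complex.I * Real.pi) / 6)) ∈ WV) →
        h g - h f = -1 + 3 * (if e ∈ m then 1 else 0))

end HexPaper

/-! Write faces as `n + b·ω` with `ω = e^{iπ/3}`. Every edge of ℍ has exactly one white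
endpoint, and the faces around the white vertex of index `(n, b)` are, counterclockwise, `(n, b)`,
`(n + 1, b)` and `(n, b + 1)`. Oriented this way, the height rule says that each of the three
crossings changes the height by `1 - 3·1_{e ∈ m}`, `e` the side crossed. In a dimer configuration
exactly one side at each vertex is a dimer, so the increments around every white and every black
vertex add up to zero: they form a closed 1-form on the triangular lattice of faces, hence the
gradient of a unique function vanishing at `f₀`. Conversely the increment across a side tells
whether the side is a dimer, so `h_m` determines `m`. -/

section Potential

variable {G : Type*} [AddCommGroup G]

def intPrimitive (g : ℤ → G) (n : ℤ) : G :=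
  ∑ i ∈ Finset.Ico 0 n, g i - ∑ i ∈ Finset.Ico n 0, g i

@[simp] lemma intPrimitive_zero (g : ℤ → G) : intPrimitive g 0 = 0 := by
  simp [intPrimitive]

lemma intPrimitive_add_one (g : ℤ → G) (n : ℤ) :
    intPrimitive g (n + 1) = intPrimitive g n + g n := by
  rcases le_or_gt 0 n with hn | hn
  · rw [intPrimitive, intPrimitive, ← Finset.insert_Ico_right_eq_Ico_add_one hn,
      Finset.sum_insert (by simp), Finset.Ico_eq_empty_of_le (show (0 : ℤ) ≤ n + 1 by omega),
      Finset.Ico_eq_empty_of_le hn]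
    abel
  · rw [intPrimitive, intPrimitive, ← Finset.insert_Ico_add_one_left_eq_Ico hn,
      Finset.sum_insert (by simp), Finset.Ico_eq_empty_of_le (show n + 1 ≤ 0 by omega),
      Finset.Ico_eq_empty_of_le hn.le]
    abel

lemma eq_add_intPrimitive {F g : ℤ → G} (hF : ∀ n, F (n + 1) = F n + g n) (n : ℤ) :
    F n = F 0 + intPrimitive g n := by
  have hper : Function.Periodic (fun k => F k - intPrimitive g k) 1 := fun k => by
    simp only [hF, intPrimitive_add_one]; abel
  simpa [sub_eq_iff_eq_add, add_comm] using hper.zsmul_eq n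

def potential (a c : ℤ → ℤ → G) (n b : ℤ) : G :=
  intPrimitive (a · 0) n + intPrimitive (c n) b

variable {a c : ℤ → ℤ → G}

@[simp] lemma potential_zero : potential a c 0 0 = 0 := by simp [potential]

lemma potential_add_one_right (n b : ℤ) :
    potential a c n (b + 1) = potential a c n b + c n b := by
  rw [potential, potential, intPrimitive_add_one, add_assoc]

lemma potential_add_one_left (hac : ∀ n b, a n (b + 1) + c n b = a n b + c (n + 1) b)
    (n b : ℤ) : potential a c (n + 1) b = potential a c n b + a n b := by
  have hper : Function.Periodic
      (fun b => a n b + intPrimitive (c n) b - intPrimitive (c (n + 1)) b) 1 := fun b => by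
    simp only [intPrimitive_add_one]
    rw [← sub_eq_zero, ← sub_eq_zero.2 (hac n b)]; abel
  have hcol := hper.zsmul_eq b
  simp only [smul_eq_mul, mul_one, intPrimitive_zero, add_zero, sub_zero] at hcol
  rw [potential, potential, intPrimitive_add_one, ← hcol]
  abel

lemma eq_potential {H : ℤ → ℤ → G} (h0 : H 0 0 = 0) (ha : ∀ n, H (n + 1) 0 = H n 0 + a n 0)
    (hc : ∀ n b, H n (b + 1) = H n b + c n b) : H = potential a c := by
  funext n b
  rw [eq_add_intPrimitive (F := H n) (hc n) b, eq_add_intPrimitive (F := (H · 0)) ha n, h0,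
    zero_add, potential]

end Potential

namespace HexPaper

open scoped Classical

def lat (x y : ℚ) : ℂ := x + y * hexω

lemma hexω_eq : hexω = 1 / 2 + (Real.sqrt 3 / 2 : ℝ) * I := by
  rw [hexω, show I * Real.pi / 3 = ((Real.pi / 3 : ℝ) : ℂ) * I by push_cast; ring,
    exp_mul_I, ← ofReal_cos, ← ofReal_sin, Real.cos_pi_div_three, Real.sin_pi_div_three]
  push_cast; ring

lemma lat_re (x y : ℚ) : (lat x y).re = x + y / 2 := by
  simp [lat, hexω_eq, div_eq_mul_inv]

lemma lat_im (x y : ℚ) : (lat x y).im = y * (Real.sqrt 3 / 2) := by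
  simp [lat, hexω_eq]

lemma lat_inj {x y x' y' : ℚ} : lat x y = lat x' y' ↔ x = x' ∧ y = y' := by
  refine ⟨fun h => ?_, fun ⟨hx, hy⟩ => hx ▸ hy ▸ rfl⟩
  have hy : y = y' := by
    have := congrArg Complex.im h
    rw [lat_im, lat_im] at this
    exact_mod_cast mul_right_cancel₀ (by positivity) this
  subst hy
  have := congrArg Complex.re h
  rw [lat_re, lat_re] at this
  exact ⟨by exact_mod_cast add_right_cancel this, rfl⟩

lemma lat_sub (x y x' y' : ℚ) : lat x y - lat x' y' = lat (x - x') (y - y') := by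
  simp only [lat]; push_cast; ring

lemma norm_lat_eq_iff (x y : ℚ) {r : ℝ} (hr : 0 ≤ r) :
    ‖lat x y‖ = r ↔ ((x ^ 2 + x * y + y ^ 2 : ℚ) : ℝ) = r ^ 2 := by
  rw [← sq_eq_sq₀ (norm_nonneg _) hr, Complex.sq_norm, Complex.normSq_apply, lat_re, lat_im]
  have h3 : Real.sqrt 3 ^ 2 = 3 := Real.sq_sqrt (by norm_num)
  push_cast
  constructor <;> intro h
  · linear_combination h - ((y : ℝ) ^ 2 / 4) * h3
  · linear_combination h + ((y : ℝ) ^ 2 / 4) * h3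

lemma norm_lat_eq_one_iff (x y : ℚ) : ‖lat x y‖ = 1 ↔ x ^ 2 + x * y + y ^ 2 = 1 := by
  rw [norm_lat_eq_iff x y zero_le_one, one_pow]; exact_mod_cast Iff.rfl

lemma norm_lat_eq_inv_sqrt_three_iff (x y : ℚ) :
    ‖lat x y‖ = (Real.sqrt 3)⁻¹ ↔ x ^ 2 + x * y + y ^ 2 = 1 / 3 := by
  rw [norm_lat_eq_iff x y (by positivity), inv_pow, Real.sq_sqrt (by norm_num),
    show ((3 : ℝ)⁻¹) = ((1 / 3 : ℚ) : ℝ) by norm_num, Rat.cast_inj]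

def face (n b : ℤ) : ℂ := (n : ℂ) + (b : ℂ) * hexω

def white (n b : ℤ) : ℂ := ((n : ℂ) + 1/3) + ((b : ℂ) + 1/3) * hexω

def black (n b : ℤ) : ℂ := ((n : ℂ) - 1/3) + ((b : ℂ) + 2/3) * hexω

lemma face_eq_lat (n b : ℤ) : face n b = lat n b := by simp [face, lat]

lemma white_eq_lat (n b : ℤ) : white n b = lat (n + 1/3) (b + 1/3) := by
  simp [white, lat]

lemma black_eq_lat (n b : ℤ) : black n b = lat (n - 1/3) (b + 2/3) := by
  simp [black, lat]

lemma face_zero : face 0 0 = 0 := by simp [face]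

lemma face_inj {n b n' b' : ℤ} : face n b = face n' b' ↔ n = n' ∧ b = b' := by
  simp [face_eq_lat, lat_inj]

lemma black_inj {n b n' b' : ℤ} : black n b = black n' b' ↔ n = n' ∧ b = b' := by
  simp [black_eq_lat, lat_inj]

lemma white_inj {n b n' b' : ℤ} : white n b = white n' b' ↔ n = n' ∧ b = b' := by
  simp [white_eq_lat, lat_inj]

lemma white_ne_black (n b n' b' : ℤ) : white n b ≠ black n' b' := by
  rw [white_eq_lat, black_eq_lat, Ne, lat_inj]
  rintro ⟨-, h⟩
  have : (3 * (b - b') : ℤ) = 1 := by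
    exact_mod_cast (by linear_combination 3 * h : (3 * (b - b') : ℚ) = 1)
  omega

lemma notMem_BV_of_mem_WV {z : ℂ} (hz : z ∈ WV) : z ∉ BV := by
  rintro ⟨n', b', rfl⟩
  obtain ⟨n, b, hz⟩ := hz
  exact white_ne_black n b n' b' hz.symm

def ruleVertex (f g : ℂ) : ℂ :=
  (Real.sqrt 3 : ℂ)⁻¹ * (f * Complex.exp (Complex.I * Real.pi / 6) +
    g * Complex.exp (-(Complex.I * Real.pi) / 6))

lemma ruleVertex_lat (x y x' y' : ℚ) :
    ruleVertex (lat x y) (lat x' y') =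
      lat ((x - y + 2 * x' + y') / 3) ((x + 2 * y - x' + y') / 3) := by
  have hexp : ∀ θ : ℝ, Complex.exp (θ * I) = Real.cos θ + Real.sin θ * I := fun θ => by
    rw [exp_mul_I, ← ofReal_cos, ← ofReal_sin]
  rw [ruleVertex, show I * Real.pi / 6 = ((Real.pi / 6 : ℝ) : ℂ) * I by push_cast; ring,
    show -(I * Real.pi) / 6 = ((-(Real.pi / 6) : ℝ) : ℂ) * I by push_cast; ring, hexp, hexp,
    Real.cos_neg, Real.sin_neg, Real.cos_pi_div_six, Real.sin_pi_div_six,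
    inv_mul_eq_iff_eq_mul₀ (by simp)]
  simp only [lat, hexω_eq]
  have h3 : (Real.sqrt 3 : ℂ) ^ 2 = 3 := by rw [← ofReal_pow, Real.sq_sqrt (by norm_num)]; simp
  push_cast
  linear_combination (I * ((y : ℂ) / 2 + y' / 2 - (x + 2 * y - x' + y') / 3) / 2) * h3 +
    ((Real.sqrt 3 : ℂ) * ((y : ℂ) / 2 - y' / 2) / 2) * I_sq

lemma face_sub_face (n b n' b' : ℤ) : face n b - face n' b' = face (n - n') (b - b') := by
  simp only [face]; push_cast; ring

lemma white_sub_white (n b n' b' : ℤ) : white n b - white n' b' = face (n - n') (b - b') := by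
  simp only [white, face]; push_cast; ring

lemma black_sub_black (n b n' b' : ℤ) : black n b - black n' b' = face (n - n') (b - b') := by
  simp only [black, face]; push_cast; ring

lemma norm_face_eq_one_iff (i j : ℤ) : ‖face i j‖ = 1 ↔ i ^ 2 + i * j + j ^ 2 = 1 := by
  rw [face_eq_lat, norm_lat_eq_one_iff]; exact_mod_cast Iff.rfl

lemma norm_face_ne_inv_sqrt_three (i j : ℤ) : ‖face i j‖ ≠ (Real.sqrt 3)⁻¹ := by
  rw [face_eq_lat, Ne, norm_lat_eq_inv_sqrt_three_iff]
  intro h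
  have : (3 * (i ^ 2 + i * j + j ^ 2) : ℤ) = 1 := by
    exact_mod_cast (by linear_combination 3 * h : (3 * (i ^ 2 + i * j + j ^ 2) : ℚ) = 1)
  omega

lemma eisenstein_norm_eq_one {i j : ℤ} (h : i ^ 2 + i * j + j ^ 2 = 1) :
    (i = 1 ∧ j = 0) ∨ (i = -1 ∧ j = 0) ∨ (i = 0 ∧ j = 1) ∨ (i = 0 ∧ j = -1) ∨
      (i = 1 ∧ j = -1) ∨ (i = -1 ∧ j = 1) := by
  have hi : -1 ≤ i ∧ i ≤ 1 := by constructor <;> nlinarith [sq_nonneg (i + 2 * j)]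
  have hj : -1 ≤ j ∧ j ≤ 1 := by constructor <;> nlinarith [sq_nonneg (2 * i + j)]
  obtain ⟨hi₁, hi₂⟩ := hi
  obtain ⟨hj₁, hj₂⟩ := hj
  interval_cases i <;> interval_cases j <;> simp_all

lemma norm_white_sub_black_cases {n b n' b' : ℤ}
    (h : ‖white n b - black n' b'‖ = (Real.sqrt 3)⁻¹) :
    (n' = n + 1 ∧ b' = b - 1) ∨ (n' = n ∧ b' = b) ∨ (n' = n + 1 ∧ b' = b) := by
  rw [white_eq_lat, black_eq_lat, lat_sub, norm_lat_eq_inv_sqrt_three_iff] at h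
  obtain ⟨i, hi⟩ : ∃ i, i = n - n' := ⟨_, rfl⟩
  obtain ⟨j, hj⟩ : ∃ j, j = b - b' := ⟨_, rfl⟩
  have hint : (3 * i + 2) ^ 2 + (3 * i + 2) * (3 * j - 1) + (3 * j - 1) ^ 2 = 3 := by
    have : (((3 * i + 2) ^ 2 + (3 * i + 2) * (3 * j - 1) + (3 * j - 1) ^ 2 : ℤ) : ℚ) = 3 := by
      rw [hi, hj]; push_cast; linear_combination 9 * h
    exact_mod_cast this
  have hi : -1 ≤ i ∧ i ≤ 0 := by constructor <;> nlinarith [sq_nonneg (3 * i + 6 * j)]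
  have hj : 0 ≤ j ∧ j ≤ 1 := by constructor <;> nlinarith [sq_nonneg (6 * i + 3 * j + 3)]
  obtain ⟨hi₁, hi₂⟩ := hi
  obtain ⟨hj₁, hj₂⟩ := hj
  interval_cases i <;> interval_cases j <;> omega

-- The three sides at the white vertex `(n, b)`, named by the direction in which they leave it.
def edgeS (n b : ℤ) : Sym2 ℂ := s(white n b, black (n + 1) (b - 1))

def edgeNW (n b : ℤ) : Sym2 ℂ := s(white n b, black n b)

def edgeNE (n b : ℤ) : Sym2 ℂ := s(white n b, black (n + 1) b)

lemma exists_eq_of_mem_hexEdges {e : Sym2 ℂ} (he : e ∈ HexEdges) {x : ℂ} (hx : x ∈ e) :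
    ∃ y ∈ HexVerts, ‖x - y‖ = (Real.sqrt 3)⁻¹ ∧ e = s(x, y) := by
  obtain ⟨u, v, hu, hv, huv, rfl⟩ := he
  rcases Sym2.mem_iff.1 hx with rfl | rfl
  · exact ⟨v, hv, huv, rfl⟩
  · exact ⟨u, hu, by rwa [norm_sub_rev], Sym2.eq_swap⟩

lemma eq_black_of_norm_white_sub {n b : ℤ} {z : ℂ} (hz : z ∈ HexVerts)
    (h : ‖white n b - z‖ = (Real.sqrt 3)⁻¹) :
    z = black (n + 1) (b - 1) ∨ z = black n b ∨ z = black (n + 1) b := by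
  rcases hz with ⟨n', b', rfl⟩ | ⟨n', b', rfl⟩
  · change ‖white n b - white n' b'‖ = _ at h
    exact absurd (white_sub_white n b n' b' ▸ h) (norm_face_ne_inv_sqrt_three _ _)
  · rcases norm_white_sub_black_cases h with ⟨rfl, rfl⟩ | ⟨rfl, rfl⟩ | ⟨rfl, rfl⟩
    exacts [Or.inl rfl, Or.inr (Or.inl rfl), Or.inr (Or.inr rfl)]

lemma eq_white_of_norm_black_sub {n b : ℤ} {z : ℂ} (hz : z ∈ HexVerts)
    (h : ‖black (n + 1) b - z‖ = (Real.sqrt 3)⁻¹) :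
    z = white n (b + 1) ∨ z = white (n + 1) b ∨ z = white n b := by
  rcases hz with ⟨n', b', rfl⟩ | ⟨n', b', rfl⟩
  · change ‖black (n + 1) b - white n' b'‖ = _ at h
    change white n' b' = _ ∨ white n' b' = _ ∨ white n' b' = _
    simp only [white_inj]
    rw [norm_sub_rev] at h
    rcases norm_white_sub_black_cases h with ⟨h₁, h₂⟩ | ⟨h₁, h₂⟩ | ⟨h₁, h₂⟩ <;> omega
  · change ‖black (n + 1) b - black n' b'‖ = _ at h
    exact absurd (black_sub_black _ _ n' b' ▸ h) (norm_face_ne_inv_sqrt_three _ _)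

lemma edges_at_white {n b : ℤ} {e : Sym2 ℂ} (he : e ∈ HexEdges) (hw : white n b ∈ e) :
    e = edgeS n b ∨ e = edgeNW n b ∨ e = edgeNE n b := by
  obtain ⟨z, hz, hd, rfl⟩ := exists_eq_of_mem_hexEdges he hw
  rcases eq_black_of_norm_white_sub hz hd with rfl | rfl | rfl
  exacts [Or.inl rfl, Or.inr (Or.inl rfl), Or.inr (Or.inr rfl)]

lemma edges_at_black {n b : ℤ} {e : Sym2 ℂ} (he : e ∈ HexEdges) (hb : black (n + 1) b ∈ e) :
    e = edgeS n (b + 1) ∨ e = edgeNW (n + 1) b ∨ e = edgeNE n b := by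
  obtain ⟨z, hz, hd, rfl⟩ := exists_eq_of_mem_hexEdges he hb
  rw [edgeS, edgeNW, edgeNE, add_sub_cancel_right]
  rcases eq_white_of_norm_black_sub hz hd with rfl | rfl | rfl <;> simp [Sym2.eq_swap]

lemma hexEdges_cases {e : Sym2 ℂ} (he : e ∈ HexEdges) :
    ∃ n b : ℤ, e = edgeS n b ∨ e = edgeNW n b ∨ e = edgeNE n b := by
  obtain ⟨u, v, hu, hv, huv, rfl⟩ := he
  have hw : ∃ n b : ℤ, white n b ∈ s(u, v) := by
    rcases hu with ⟨n, b, rfl⟩ | ⟨n, b, rfl⟩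
    · exact ⟨n, b, Sym2.mem_mk_left _ _⟩
    rcases hv with ⟨n', b', rfl⟩ | ⟨n', b', rfl⟩
    · exact ⟨n', b', Sym2.mem_mk_right _ _⟩
    change ‖black n b - black n' b'‖ = _ at huv
    exact absurd (black_sub_black _ _ _ _ ▸ huv) (norm_face_ne_inv_sqrt_three _ _)
  obtain ⟨n, b, hw⟩ := hw
  exact ⟨n, b, edges_at_white ⟨u, v, hu, hv, huv, rfl⟩ hw⟩

def ind (m : Set (Sym2 ℂ)) (e : Sym2 ℂ) : ℤ := if e ∈ m then 1 else 0

lemma ncard_inter_coe_finset {α : Type*} (m : Set α) (s : Finset α) :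
    (m ∩ ↑s).ncard = ∑ x ∈ s, if x ∈ m then 1 else 0 := by
  rw [← Finset.card_filter, ← Set.ncard_coe_finset]
  congr 1; ext; simp [and_comm]

lemma ind_add_ind_add_ind_eq_one {m : Set (Sym2 ℂ)} (hm : IsDimer m) {v : ℂ}
    (hv : v ∈ HexVerts) {x y z : Sym2 ℂ} (hxy : x ≠ y) (hxz : x ≠ z) (hyz : y ≠ z)
    (hx : v ∈ x) (hy : v ∈ y) (hz : v ∈ z)
    (hedges : ∀ e ∈ HexEdges, v ∈ e → e = x ∨ e = y ∨ e = z) :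
    ind m x + ind m y + ind m z = 1 := by
  have hset : {e ∈ m | v ∈ e} = m ∩ ↑({x, y, z} : Finset (Sym2 ℂ)) := by
    ext e
    simp only [Set.mem_ofPred_eq, Set.mem_inter_iff, Finset.coe_insert, Finset.coe_singleton,
      Set.mem_insert_iff, Set.mem_singleton_iff]
    refine ⟨fun ⟨hem, hve⟩ => ⟨hem, hedges e (hm.1 hem) hve⟩, ?_⟩
    rintro ⟨hem, rfl | rfl | rfl⟩ <;> exact ⟨hem, ‹_›⟩
  have hdeg := hm.2 v hv
  rw [degAt, hset, ncard_inter_coe_finset, Finset.sum_insert (by simp [hxy, hxz]),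
    Finset.sum_pair hyz] at hdeg
  simp only [ind]
  split_ifs at hdeg ⊢ <;> omega

lemma ind_sides_at_white {m : Set (Sym2 ℂ)} (hm : IsDimer m) (n b : ℤ) :
    ind m (edgeS n b) + ind m (edgeNW n b) + ind m (edgeNE n b) = 1 :=
  ind_add_ind_add_ind_eq_one hm (Or.inl ⟨n, b, rfl⟩)
    (by simp only [edgeS, edgeNW, Ne, Sym2.congr_right, black_inj]; omega)
    (by simp only [edgeS, edgeNE, Ne, Sym2.congr_right, black_inj]; omega)
    (by simp only [edgeNW, edgeNE, Ne, Sym2.congr_right, black_inj]; omega)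
    (Sym2.mem_mk_left _ _) (Sym2.mem_mk_left _ _) (Sym2.mem_mk_left _ _)
    (fun _ he hw => edges_at_white he hw)

lemma ind_sides_at_black {m : Set (Sym2 ℂ)} (hm : IsDimer m) (n b : ℤ) :
    ind m (edgeS n (b + 1)) + ind m (edgeNW (n + 1) b) + ind m (edgeNE n b) = 1 :=
  ind_add_ind_add_ind_eq_one hm (Or.inr ⟨n + 1, b, rfl⟩)
    (by simp only [edgeS, edgeNW, add_sub_cancel_right, Ne, Sym2.congr_left, white_inj]; omega)
    (by simp only [edgeS, edgeNE, add_sub_cancel_right, Ne, Sym2.congr_left, white_inj]; omega)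
    (by simp only [edgeNW, edgeNE, Ne, Sym2.congr_left, white_inj]; omega)
    (by rw [edgeS, add_sub_cancel_right]; exact Sym2.mem_mk_right _ _) (Sym2.mem_mk_right _ _)
    (Sym2.mem_mk_right _ _) (fun _ he hb => edges_at_black he hb)

lemma faceSides_inter_faceSides_eq {f g u v : ℂ} (hfg : f ≠ g) (hu : u ∈ HexVerts)
    (hv : v ∈ HexVerts) (huv : ‖u - v‖ = (Real.sqrt 3)⁻¹)
    (huf : ‖u - f‖ = (Real.sqrt 3)⁻¹) (hug : ‖u - g‖ = (Real.sqrt 3)⁻¹)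
    (hvf : ‖v - f‖ = (Real.sqrt 3)⁻¹) (hvg : ‖v - g‖ = (Real.sqrt 3)⁻¹) :
    faceSides f ∩ faceSides g = {s(u, v)} := by
  have hne : ∀ {x y : ℂ}, ‖x - y‖ = (Real.sqrt 3)⁻¹ → x ≠ y := by
    rintro x _ hxy rfl
    rw [sub_self, norm_zero] at hxy
    exact (by positivity : (0 : ℝ) < (Real.sqrt 3)⁻¹).ne hxy
  have hcorner : ∀ z, ‖z - f‖ = (Real.sqrt 3)⁻¹ → ‖z - g‖ = (Real.sqrt 3)⁻¹ → z = u ∨ z = v :=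
    fun z hzf hzg => EuclideanGeometry.eq_of_dist_eq_of_dist_eq_of_finrank_eq_two
      Complex.finrank_real_complex hfg (hne huv) ((dist_eq_norm u f).trans huf)
      ((dist_eq_norm v f).trans hvf) ((dist_eq_norm z f).trans hzf)
      ((dist_eq_norm u g).trans hug) ((dist_eq_norm v g).trans hvg)
      ((dist_eq_norm z g).trans hzg)
  ext e
  constructor
  · rintro ⟨⟨⟨x, y, -, -, hxy, rfl⟩, hef⟩, -, heg⟩
    rw [Sym2.ball] at hef heg
    rcases hcorner x hef.1 heg.1 with rfl | rfl <;> rcases hcorner y hef.2 heg.2 with rfl | rfl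
    exacts [absurd rfl (hne hxy), rfl, Sym2.eq_swap, absurd rfl (hne hxy)]
  · rintro rfl
    exact ⟨⟨⟨u, v, hu, hv, huv, rfl⟩, Sym2.ball.2 ⟨huf, hvf⟩⟩,
      ⟨⟨u, v, hu, hv, huv, rfl⟩, Sym2.ball.2 ⟨hug, hvg⟩⟩⟩

def RuleAt (m : Set (Sym2 ℂ)) (h : ℂ → ℤ) (f g : ℂ) : Prop :=
  ∀ e ∈ faceSides f ∩ faceSides g,
    (ruleVertex f g ∈ BV → h g - h f = 1 - 3 * ind m e) ∧
    (ruleVertex f g ∈ WV → h g - h f = -1 + 3 * ind m e)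

lemma heightRule_iff_ruleAt {m : Set (Sym2 ℂ)} {h : ℂ → ℤ} :
    heightRule m h ↔
      h 0 = 0 ∧ ∀ f g, f ∈ HexFaces → g ∈ HexFaces → ‖f - g‖ = 1 → RuleAt m h f g :=
  Iff.rfl

def IsSidePair (f g : ℂ) (e : Sym2 ℂ) : Prop :=
  ‖f - g‖ = 1 ∧ faceSides f ∩ faceSides g = {e} ∧ ruleVertex f g ∈ BV ∧ ruleVertex g f ∈ WV

namespace IsSidePair

variable {f g : ℂ} {e : Sym2 ℂ} {m : Set (Sym2 ℂ)} {h : ℂ → ℤ}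

lemma ruleAt_iff (hs : IsSidePair f g e) : RuleAt m h f g ↔ h g - h f = 1 - 3 * ind m e := by
  obtain ⟨-, hfg, hb, -⟩ := hs
  have hw : ruleVertex f g ∉ WV := fun hw => notMem_BV_of_mem_WV hw hb
  simp [RuleAt, hfg, hb, hw]

lemma ruleAt_swap_iff (hs : IsSidePair f g e) :
    RuleAt m h g f ↔ h g - h f = 1 - 3 * ind m e := by
  obtain ⟨-, hfg, -, hw⟩ := hs
  rw [Set.inter_comm] at hfg
  simp only [RuleAt, hfg, Set.mem_singleton_iff, forall_eq, hw, notMem_BV_of_mem_WV hw,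
    false_imp_iff, true_and, true_imp_iff]
  omega

end IsSidePair

lemma isSidePair_of_corners {f g u v : ℂ} (hfg : ‖f - g‖ = 1) (hu : u ∈ WV) (hv : v ∈ BV)
    (huv : ‖u - v‖ = (Real.sqrt 3)⁻¹) (huf : ‖u - f‖ = (Real.sqrt 3)⁻¹)
    (hug : ‖u - g‖ = (Real.sqrt 3)⁻¹) (hvf : ‖v - f‖ = (Real.sqrt 3)⁻¹)
    (hvg : ‖v - g‖ = (Real.sqrt 3)⁻¹) (hb : ruleVertex f g = v) (hw : ruleVertex g f = u) :
    IsSidePair f g s(u, v) := by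
  have hne : f ≠ g := by rintro rfl; simp at hfg
  exact ⟨hfg, faceSides_inter_faceSides_eq hne (Or.inl hu) (Or.inr hv) huv huf hug hvf hvg,
    hb ▸ hv, hw ▸ hu⟩

lemma isSidePair_around_white (n b : ℤ) :
    IsSidePair (face n b) (face (n + 1) b) (edgeS n b) ∧
      IsSidePair (face n (b + 1)) (face n b) (edgeNW n b) ∧
      IsSidePair (face (n + 1) b) (face n (b + 1)) (edgeNE n b) := by
  refine ⟨isSidePair_of_corners ?_ ⟨n, b, rfl⟩ ⟨n + 1, b - 1, rfl⟩ ?_ ?_ ?_ ?_ ?_ ?_ ?_,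
    isSidePair_of_corners ?_ ⟨n, b, rfl⟩ ⟨n, b, rfl⟩ ?_ ?_ ?_ ?_ ?_ ?_ ?_,
    isSidePair_of_corners ?_ ⟨n, b, rfl⟩ ⟨n + 1, b, rfl⟩ ?_ ?_ ?_ ?_ ?_ ?_ ?_⟩
  all_goals
    simp only [face_eq_lat, white_eq_lat, black_eq_lat, lat_sub, ruleVertex_lat,
      norm_lat_eq_one_iff, norm_lat_eq_inv_sqrt_three_iff, lat_inj]
    push_cast
  all_goals try refine ⟨?_, ?_⟩
  all_goals ring

lemma adjacent_faces_cases {f g : ℂ} (hf : f ∈ HexFaces) (hg : g ∈ HexFaces)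
    (hfg : ‖f - g‖ = 1) :
    ∃ n b : ℤ, (f = face n b ∧ g = face (n + 1) b) ∨ (g = face n b ∧ f = face (n + 1) b) ∨
      (f = face n (b + 1) ∧ g = face n b) ∨ (g = face n (b + 1) ∧ f = face n b) ∨
      (f = face (n + 1) b ∧ g = face n (b + 1)) ∨ (g = face (n + 1) b ∧ f = face n (b + 1)) := by
  obtain ⟨n, b, rfl⟩ := hf
  obtain ⟨n', b', rfl⟩ := hg
  change ‖face n b - face n' b'‖ = 1 at hfg
  rw [face_sub_face, norm_face_eq_one_iff] at hfg
  rcases eisenstein_norm_eq_one hfg with ⟨h₁, h₂⟩ | ⟨h₁, h₂⟩ | ⟨h₁, h₂⟩ | ⟨h₁, h₂⟩ | ⟨h₁, h₂⟩ |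
    ⟨h₁, h₂⟩
  · obtain ⟨rfl, rfl⟩ : n = n' + 1 ∧ b = b' := by omega
    exact ⟨_, _, Or.inr (Or.inl ⟨rfl, rfl⟩)⟩
  · obtain ⟨rfl, rfl⟩ : n' = n + 1 ∧ b' = b := by omega
    exact ⟨_, _, Or.inl ⟨rfl, rfl⟩⟩
  · obtain ⟨rfl, rfl⟩ : n = n' ∧ b = b' + 1 := by omega
    exact ⟨_, _, Or.inr (Or.inr (Or.inl ⟨rfl, rfl⟩))⟩
  · obtain ⟨rfl, rfl⟩ : n' = n ∧ b' = b + 1 := by omega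
    exact ⟨_, _, Or.inr (Or.inr (Or.inr (Or.inl ⟨rfl, rfl⟩)))⟩
  · obtain ⟨rfl, rfl⟩ : n = n' + 1 ∧ b' = b + 1 := by omega
    exact ⟨_, _, Or.inr (Or.inr (Or.inr (Or.inr (Or.inl ⟨rfl, rfl⟩))))⟩
  · obtain ⟨rfl, rfl⟩ : n' = n + 1 ∧ b = b' + 1 := by omega
    exact ⟨_, _, Or.inr (Or.inr (Or.inr (Or.inr (Or.inr ⟨rfl, rfl⟩))))⟩

def GridRule (m : Set (Sym2 ℂ)) (H : ℤ → ℤ → ℤ) : Prop :=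
  ∀ n b, H (n + 1) b - H n b = 1 - 3 * ind m (edgeS n b) ∧
    H n b - H n (b + 1) = 1 - 3 * ind m (edgeNW n b) ∧
    H n (b + 1) - H (n + 1) b = 1 - 3 * ind m (edgeNE n b)

lemma heightRule_iff_gridRule {m : Set (Sym2 ℂ)} {h : ℂ → ℤ} :
    heightRule m h ↔ h 0 = 0 ∧ GridRule m (fun n b => h (face n b)) := by
  rw [heightRule_iff_ruleAt]
  refine and_congr_right fun _ => ⟨fun hrule n b => ?_, fun hgrid f g hf hg hfg => ?_⟩
  · obtain ⟨hS, hNW, hNE⟩ := isSidePair_around_white n b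
    exact ⟨hS.ruleAt_iff.1 (hrule _ _ ⟨_, _, rfl⟩ ⟨_, _, rfl⟩ hS.1),
      hNW.ruleAt_iff.1 (hrule _ _ ⟨_, _, rfl⟩ ⟨_, _, rfl⟩ hNW.1),
      hNE.ruleAt_iff.1 (hrule _ _ ⟨_, _, rfl⟩ ⟨_, _, rfl⟩ hNE.1)⟩
  · obtain ⟨n, b, hcases⟩ := adjacent_faces_cases hf hg hfg
    obtain ⟨hS, hNW, hNE⟩ := isSidePair_around_white n b
    rcases hcases with ⟨rfl, rfl⟩ | ⟨rfl, rfl⟩ | ⟨rfl, rfl⟩ | ⟨rfl, rfl⟩ | ⟨rfl, rfl⟩ |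
      ⟨rfl, rfl⟩
    exacts [hS.ruleAt_iff.2 (hgrid n b).1, hS.ruleAt_swap_iff.2 (hgrid n b).1,
      hNW.ruleAt_iff.2 (hgrid n b).2.1, hNW.ruleAt_swap_iff.2 (hgrid n b).2.1,
      hNE.ruleAt_iff.2 (hgrid n b).2.2, hNE.ruleAt_swap_iff.2 (hgrid n b).2.2]

def gridHeight (m : Set (Sym2 ℂ)) : ℤ → ℤ → ℤ :=
  potential (fun n b => 1 - 3 * ind m (edgeS n b)) (fun n b => 3 * ind m (edgeNW n b) - 1)

lemma gridHeight_zero (m : Set (Sym2 ℂ)) : gridHeight m 0 0 = 0 := potential_zero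

lemma gridRule_gridHeight {m : Set (Sym2 ℂ)} (hm : IsDimer m) : GridRule m (gridHeight m) := by
  set a : ℤ → ℤ → ℤ := fun n b => 1 - 3 * ind m (edgeS n b)
  set c : ℤ → ℤ → ℤ := fun n b => 3 * ind m (edgeNW n b) - 1
  have hclosed : ∀ n b, a n (b + 1) + c n b = a n b + c (n + 1) b := fun n b => by
    simp only [a, c]
    linear_combination 3 * ind_sides_at_white hm n b - 3 * ind_sides_at_black hm n b
  intro n b
  have hE := potential_add_one_left hclosed n b
  have hN := potential_add_one_right (a := a) (c := c) n b
  have hw := ind_sides_at_white hm n b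
  simp only [gridHeight, a, c] at hE hN ⊢
  refine ⟨?_, ?_, ?_⟩ <;> linarith

lemma eq_gridHeight {m : Set (Sym2 ℂ)} {H : ℤ → ℤ → ℤ} (h0 : H 0 0 = 0) (hH : GridRule m H) :
    H = gridHeight m :=
  eq_potential h0 (fun n => by linarith [(hH n 0).1]) (fun n b => by linarith [(hH n b).2.1])

lemma exists_heightRule {m : Set (Sym2 ℂ)} (hm : IsDimer m) : ∃ h : ℂ → ℤ, heightRule m h := by
  have hinj : Function.Injective (fun p : ℤ × ℤ => face p.1 p.2) := fun p q hpq =>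
    Prod.ext_iff.2 (face_inj.1 hpq)
  set h := Function.extend (fun p : ℤ × ℤ => face p.1 p.2) (fun p => gridHeight m p.1 p.2) 0
  have hface : ∀ n b, h (face n b) = gridHeight m n b := fun n b =>
    hinj.extend_apply (fun p => gridHeight m p.1 p.2) 0 (n, b)
  refine ⟨h, heightRule_iff_gridRule.2 ⟨?_, funext₂ hface ▸ gridRule_gridHeight hm⟩⟩
  rw [← face_zero, hface, gridHeight_zero]

lemma eq_gridHeight_of_heightRule {m : Set (Sym2 ℂ)} {h : ℂ → ℤ} (hh : heightRule m h) :
    (fun n b => h (face n b)) = gridHeight m := by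
  obtain ⟨h0, hgrid⟩ := heightRule_iff_gridRule.1 hh
  exact eq_gridHeight (by simpa [face_zero] using h0) hgrid

lemma heightRule_unique {m : Set (Sym2 ℂ)} {h h' : ℂ → ℤ} (hh : heightRule m h)
    (hh' : heightRule m h') : ∀ f ∈ HexFaces, h' f = h f := by
  rintro _ ⟨n, b, rfl⟩
  exact congr_fun₂ ((eq_gridHeight_of_heightRule hh').trans
    (eq_gridHeight_of_heightRule hh).symm) n b

lemma ind_eq_of_gridRule {m m' : Set (Sym2 ℂ)} {H : ℤ → ℤ → ℤ} (hH : GridRule m H)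
    (hH' : GridRule m' H) {e : Sym2 ℂ} (he : e ∈ HexEdges) : ind m e = ind m' e := by
  obtain ⟨n, b, rfl | rfl | rfl⟩ := hexEdges_cases he
  · linarith [(hH n b).1, (hH' n b).1]
  · linarith [(hH n b).2.1, (hH' n b).2.1]
  · linarith [(hH n b).2.2, (hH' n b).2.2]

lemma eq_of_gridRule {m m' : Set (Sym2 ℂ)} {H : ℤ → ℤ → ℤ} (hm : m ⊆ HexEdges)
    (hm' : m' ⊆ HexEdges) (hH : GridRule m H) (hH' : GridRule m' H) : m = m' := by
  ext e
  by_cases he : e ∈ HexEdges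
  · have hind := ind_eq_of_gridRule hH hH' he
    simp only [ind] at hind
    split_ifs at hind <;> simp_all
  · exact iff_of_false (fun h => he (hm h)) (fun h => he (hm' h))

/-- Definition 3.8: every dimer configuration has a height function,
unique on the faces, and the map `m ↦ h_m` is injective: dimer configurations are in
bijection with their height functions. -/
theorem height_function_exists_unique_injective :
    (∀ m : Set (Sym2 ℂ), IsDimer m →
      ∃ h : ℂ → ℤ, heightRule m h ∧
        ∀ h' : ℂ → ℤ, heightRule m h' → ∀ f ∈ HexFaces, h' f = h f) ∧
    (∀ m m' : Set (Sym2 ℂ), ∀ h h' : ℂ → ℤ,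
      IsDimer m → IsDimer m' → heightRule m h → heightRule m' h' →
      (∀ f ∈ HexFaces, h f = h' f) → m = m') := by
  refine ⟨fun m hm => ?_, fun m m' h h' hm hm' hh hh' heq => ?_⟩
  · obtain ⟨h, hh⟩ := exists_heightRule hm
    exact ⟨h, hh, fun h' hh' => heightRule_unique hh hh'⟩
  · have hface : (fun n b => h' (face n b)) = fun n b => h (face n b) :=
      funext₂ fun n b => (heq _ ⟨n, b, rfl⟩).symm
    exact eq_of_gridRule hm.1 hm'.1 (heightRule_iff_gridRule.1 hh).2
      (hface ▸ (heightRule_iff_gridRule.1 hh').2)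

end HexPaper
end
end
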